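/- arXiv:2109.06403 — 2 statements merged into one kernel-verified Lean document; each statement's English description precedes it below -/
import Mathlib

section
/- Let ℬ ≤ M(n,𝔽) be a matrix space and let c > 0 be the maximum of sd_ℬ(U) over all subspaces U ≤ 𝔽ⁿ. Then there exists a unique subspace U ≤ 𝔽ⁿ of the smallest dimension satisfying sd_ℬ(U) = c, and there exists a unique subspace U' ≤ 𝔽ⁿ of the largest dimension satisfying sd_ℬ(U') = c. Moreover, the intersection and the sum of any two subspaces with sd_ℬ equal to c again have sd_ℬ equal to c. -/
/-- The image `ℬ(U)` of a subspace `U ≤ 𝔽ⁿ` under a matrix space `ℬ ≤ M(n,𝔽)`. -/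
def matImage {𝔽 : Type*} [Field 𝔽] {n : ℕ} (ℬ : Submodule 𝔽 (Matrix (Fin n) (Fin n) 𝔽))
    (U : Submodule 𝔽 (Fin n → 𝔽)) : Submodule 𝔽 (Fin n → 𝔽) :=
  Submodule.span 𝔽 {v | ∃ B ∈ ℬ, ∃ u ∈ U, v = B.mulVec u}

/-- `sd_ℬ(U) = dim U − dim ℬ(U)`. -/
noncomputable def sd {𝔽 : Type*} [Field 𝔽] {n : ℕ} (ℬ : Submodule 𝔽 (Matrix (Fin n) (Fin n) 𝔽))
    (U : Submodule 𝔽 (Fin n → 𝔽)) : ℤ :=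
  (Module.finrank 𝔽 U : ℤ) - (Module.finrank 𝔽 (matImage ℬ U) : ℤ)

lemma matImage_mono {𝔽 : Type*} [Field 𝔽] {n : ℕ} (ℬ : Submodule 𝔽 (Matrix (Fin n) (Fin n) 𝔽))
    {U V : Submodule 𝔽 (Fin n → 𝔽)} (h : U ≤ V) : matImage ℬ U ≤ matImage ℬ V := by
  apply Submodule.span_mono
  rintro v ⟨B, hB, u, hu, rfl⟩
  exact ⟨B, hB, u, h hu, rfl⟩

lemma matImage_sup {𝔽 : Type*} [Field 𝔽] {n : ℕ} (ℬ : Submodule 𝔽 (Matrix (Fin n) (Fin n) 𝔽))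
    (U V : Submodule 𝔽 (Fin n → 𝔽)) :
    matImage ℬ (U ⊔ V) = matImage ℬ U ⊔ matImage ℬ V := by
  apply le_antisymm
  · apply Submodule.span_le.2
    rintro v ⟨B, hB, u, hu, rfl⟩
    obtain ⟨x, hx, y, hy, rfl⟩ := Submodule.mem_sup.1 hu
    rw [Matrix.mulVec_add]
    exact Submodule.add_mem _ (Submodule.mem_sup_left (Submodule.subset_span ⟨B, hB, x, hx, rfl⟩))
      (Submodule.mem_sup_right (Submodule.subset_span ⟨B, hB, y, hy, rfl⟩))
  · exact sup_le (matImage_mono ℬ le_sup_left) (matImage_mono ℬ le_sup_right)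

lemma sd_supermodular {𝔽 : Type*} [Field 𝔽] {n : ℕ}
    (ℬ : Submodule 𝔽 (Matrix (Fin n) (Fin n) 𝔽)) (U V : Submodule 𝔽 (Fin n → 𝔽)) :
    sd ℬ U + sd ℬ V ≤ sd ℬ (U ⊓ V) + sd ℬ (U ⊔ V) := by
  have hdim : Module.finrank 𝔽 ↥(U ⊔ V) + Module.finrank 𝔽 ↥(U ⊓ V)
      = Module.finrank 𝔽 U + Module.finrank 𝔽 V :=
    Submodule.finrank_sup_add_finrank_inf_eq U V
  have hinf : matImage ℬ (U ⊓ V) ≤ matImage ℬ U ⊓ matImage ℬ V :=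
    le_inf (matImage_mono ℬ inf_le_left) (matImage_mono ℬ inf_le_right)
  have him : Module.finrank 𝔽 (matImage ℬ (U ⊓ V)) + Module.finrank 𝔽 (matImage ℬ (U ⊔ V))
      ≤ Module.finrank 𝔽 (matImage ℬ U) + Module.finrank 𝔽 (matImage ℬ V) := by
    rw [matImage_sup]
    have h1 : Module.finrank 𝔽 (matImage ℬ (U ⊓ V))
        ≤ Module.finrank 𝔽 ↥(matImage ℬ U ⊓ matImage ℬ V) := Submodule.finrank_mono hinf
    have h2 : Module.finrank 𝔽 ↥(matImage ℬ U ⊔ matImage ℬ V)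
        + Module.finrank 𝔽 ↥(matImage ℬ U ⊓ matImage ℬ V)
        = Module.finrank 𝔽 (matImage ℬ U) + Module.finrank 𝔽 (matImage ℬ V) :=
      Submodule.finrank_sup_add_finrank_inf_eq _ _
    omega
  unfold sd
  -- conclude by arithmetic
  omega

/-- If `c > 0` is the maximum of `sd_ℬ` over all subspaces, then there is a unique subspace of
smallest dimension with `sd_ℬ = c`, a unique subspace of largest dimension with `sd_ℬ = c`, and
the class of subspaces with `sd_ℬ = c` is closed under intersections and sums. -/
theorem canonical_shrunk_subspace {𝔽 : Type*} [Field 𝔽] {n : ℕ}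
    (ℬ : Submodule 𝔽 (Matrix (Fin n) (Fin n) 𝔽)) (c : ℤ) (hc : 0 < c)
    (hmax : ∀ U : Submodule 𝔽 (Fin n → 𝔽), sd ℬ U ≤ c)
    (hex : ∃ U : Submodule 𝔽 (Fin n → 𝔽), sd ℬ U = c) :
    (∃! U : Submodule 𝔽 (Fin n → 𝔽), sd ℬ U = c ∧
        ∀ W : Submodule 𝔽 (Fin n → 𝔽), sd ℬ W = c →
          Module.finrank 𝔽 U ≤ Module.finrank 𝔽 W) ∧
    (∃! U' : Submodule 𝔽 (Fin n → 𝔽), sd ℬ U' = c ∧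
        ∀ W : Submodule 𝔽 (Fin n → 𝔽), sd ℬ W = c →
          Module.finrank 𝔽 W ≤ Module.finrank 𝔽 U') ∧
    (∀ U₁ U₂ : Submodule 𝔽 (Fin n → 𝔽), sd ℬ U₁ = c → sd ℬ U₂ = c →
        sd ℬ (U₁ ⊓ U₂) = c ∧ sd ℬ (U₁ ⊔ U₂) = c) := by
  -- closure under inf and sup
  have hclose : ∀ U₁ U₂ : Submodule 𝔽 (Fin n → 𝔽), sd ℬ U₁ = c → sd ℬ U₂ = c →
      sd ℬ (U₁ ⊓ U₂) = c ∧ sd ℬ (U₁ ⊔ U₂) = c := by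
    intro U₁ U₂ h1 h2
    have hs := sd_supermodular ℬ U₁ U₂
    have hi := hmax (U₁ ⊓ U₂)
    have hu := hmax (U₁ ⊔ U₂)
    constructor <;> omega
  refine ⟨?_, ?_, hclose⟩
  · -- unique minimum
    have hS : ∃ k : ℕ, ∃ U : Submodule 𝔽 (Fin n → 𝔽), sd ℬ U = c ∧ Module.finrank 𝔽 U = k := by
      obtain ⟨U, hU⟩ := hex
      exact ⟨_, U, hU, rfl⟩
    classical
    obtain ⟨U, hUc, hUk⟩ := Nat.find_spec hS
    have hmin : ∀ W : Submodule 𝔽 (Fin n → 𝔽), sd ℬ W = c →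
        Module.finrank 𝔽 U ≤ Module.finrank 𝔽 W := by
      intro W hW
      rw [hUk]
      exact Nat.find_min' hS ⟨W, hW, rfl⟩
    refine ⟨U, ⟨hUc, hmin⟩, ?_⟩
    rintro V ⟨hVc, hVmin⟩
    have hinf := (hclose U V hUc hVc).1
    have h1 : Module.finrank 𝔽 U ≤ Module.finrank 𝔽 ↥(U ⊓ V) := hmin _ hinf
    have h2 : Module.finrank 𝔽 V ≤ Module.finrank 𝔽 ↥(U ⊓ V) := hVmin _ hinf
    have e1 : (U ⊓ V : Submodule 𝔽 (Fin n → 𝔽)) = U :=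
      Submodule.eq_of_le_of_finrank_le inf_le_left h1
    have e2 : (U ⊓ V : Submodule 𝔽 (Fin n → 𝔽)) = V :=
      Submodule.eq_of_le_of_finrank_le inf_le_right h2
    exact e2.symm.trans e1
  · -- unique maximum
    have hS : ∃ k : ℕ, ∃ U : Submodule 𝔽 (Fin n → 𝔽), sd ℬ U = c ∧
        n - Module.finrank 𝔽 U = k := by
      obtain ⟨U, hU⟩ := hex
      exact ⟨_, U, hU, rfl⟩
    classical
    obtain ⟨U, hUc, hUk⟩ := Nat.find_spec hS
    have hbd : ∀ W : Submodule 𝔽 (Fin n → 𝔽), Module.finrank 𝔽 W ≤ n := by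
      intro W
      have := Submodule.finrank_le W
      simpa using this
    have hmaxd : ∀ W : Submodule 𝔽 (Fin n → 𝔽), sd ℬ W = c →
        Module.finrank 𝔽 W ≤ Module.finrank 𝔽 U := by
      intro W hW
      have := Nat.find_min' hS ⟨W, hW, rfl⟩
      have h1 := hbd W
      have h2 := hbd U
      omega
    refine ⟨U, ⟨hUc, hmaxd⟩, ?_⟩
    rintro V ⟨hVc, hVmax⟩
    have hsup := (hclose U V hUc hVc).2
    have h1 : Module.finrank 𝔽 ↥(U ⊔ V) ≤ Module.finrank 𝔽 U := hmaxd _ hsup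
    have h2 : Module.finrank 𝔽 ↥(U ⊔ V) ≤ Module.finrank 𝔽 V := hVmax _ hsup
    have e1 : U = U ⊔ V := Submodule.eq_of_le_of_finrank_le le_sup_left h1
    have e2 : V = U ⊔ V := Submodule.eq_of_le_of_finrank_le le_sup_right h2
    exact e2.trans e1.symm
end

section
/- Let 𝔤 be a finite-dimensional semisimple Lie algebra over an algebraically closed field 𝔽 of characteristic not 2 or 3, and let (ρ, V) be a representation of 𝔤 such that the trivial representation is not a subrepresentation of (ρ, V) (i.e., there is no nonzero v ∈ V with ρ(x)v = 0 for all x ∈ 𝔤). Then any linear kernel vector ψ defines a homomorphism of representations from the adjoint representation (ad, 𝔤) to (ρ, V): for every x, y ∈ 𝔤, ψ([x,y]) − ρ(x)ψ(y) = 0. -/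
attribute [local instance] LieRing.ofAssociativeRing

/-!
Write `F x y = ψ ⁅x, y⁆ - ρ x (ψ y)`. Polarising `ρ x (ψ x) = 0` makes `(u, v) ↦ ρ u (ψ v)`
antisymmetric, and then `ρ u (F v w)` is alternating in `u, v, w`. Expanding brackets (and
dividing by 2) relates the values `ρ ⁅u, v⁆ (ρ x (F y z))` at the different orderings of five
arguments by a linear system whose only solution is zero when 2 is invertible. A semisimple Lie
algebra is perfect, so `ρ t (ρ x (F y z)) = 0` for every `t`; as `V` has no nonzero invariant
vector, first `ρ x (F y z) = 0` for every `x`, and then `F y z = 0`.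
-/

section

variable {R M α : Type*} [CommRing R] [AddCommGroup M] [Module R M]

theorem eq_zero_of_petersen_exchange (W : α → α → α → α → α → M)
    (skew : ∀ a b c d e, W b a c d e = -W a b c d e)
    (alt₁ : ∀ a b c d e, W a b d c e = -W a b c d e)
    (alt₂ : ∀ a b c d e, W a b c e d = -W a b c d e)
    (exch : ∀ u v x y z, W u v x y z = W x z u v y - W x y u v z + W z y u v x)
    (h2 : IsSMulRegular M (2 : R)) (u v x y z : α) : W u v x y z = 0 := by
  have cyc : ∀ a b c d e, W a b d e c = W a b c d e := fun a b c d e => by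
    rw [alt₂, alt₁, neg_neg]
  /- At fixed `u v x y z`, the ten values `W p q r s t` with `{p, q}` running over the 2-subsets
  (and `r s t` the complement in a fixed order) satisfy `w = A w`, where `A` is a signed adjacency
  matrix of the Petersen graph (2-subsets adjacent when disjoint). Since
  `(A + 1) (A + 3) (A - 2) = 0`, this forces `(1 + 1) (1 + 3) (1 - 2) w = 0`, i.e. `8 w = 0`. -/
  refine h2.pow 3 ?_
  simp only [smul_zero]
  linear_combination (norm := module)
    - exch u v y z x - exch u x v z y + exch u y v z x + exch u z v x y + exch v x u z y
    - exch v y u z x - exch v z u x y - (3 : R) • exch x y u z v - (3 : R) • exch z x u y v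
    + (3 : R) • exch y z u v x + (3 : R) • skew y x u z v + (3 : R) • skew x z u y v
    + (3 : R) • skew v x y z u + (2 : R) • alt₂ u x v y z - alt₂ v y u z x - alt₂ y z u v x
    - alt₂ v z u x y - (2 : R) • alt₂ x z u v y - (2 : R) • alt₂ v x u y z
    - (2 : R) • alt₂ y x u v z + alt₂ u y v z x + alt₂ u z v x y - (2 : R) • cyc u v x y z
    + cyc y z u v x - cyc x z u v y - cyc y x u v z + (3 : R) • cyc u z v x y
    - (3 : R) • cyc v z u x y + (3 : R) • cyc u v z x y + (3 : R) • cyc u y v z x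
    - (3 : R) • cyc v y u z x + (3 : R) • cyc u x v y z - (3 : R) • cyc v x u y z

end

theorem LieAlgebra.IsSemisimple.lie_top_top_eq_top {R L : Type*} [CommRing R] [LieRing L]
    [LieAlgebra R L] [LieAlgebra.IsSemisimple R L] :
    ⁅(⊤ : LieIdeal R L), (⊤ : LieIdeal R L)⁆ = ⊤ := by
  set D : LieIdeal R L := ⁅(⊤ : LieIdeal R L), (⊤ : LieIdeal R L)⁆
  have hD : IsLieAbelian (Dᶜ : LieIdeal R L) := by
    rw [LieSubmodule.lie_abelian_iff_lie_self_eq_bot, eq_bot_iff, ← inf_compl_eq_bot (a := D)]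
    exact le_inf (LieSubmodule.mono_lie le_top le_top) (LieSubmodule.lie_le_right _ _)
  exact compl_eq_bot.mp ((hasTrivialRadical_iff_no_abelian_ideals R L).mp inferInstance _ hD)

theorem LieAlgebra.IsSemisimple.linearMap_eq_zero_of_map_lie {R L M : Type*} [CommRing R]
    [LieRing L] [LieAlgebra R L] [LieAlgebra.IsSemisimple R L] [AddCommGroup M] [Module R M]
    (f : L →ₗ[R] M) (hf : ∀ x y : L, f ⁅x, y⁆ = 0) : f = 0 := by
  ext t
  have ht : t ∈ ⁅(⊤ : LieIdeal R L), (⊤ : LieIdeal R L)⁆ := by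
    rw [lie_top_top_eq_top]
    exact LieSubmodule.mem_top t
  rw [← LieSubmodule.mem_toSubmodule, LieSubmodule.lieIdeal_oper_eq_linear_span] at ht
  refine (Submodule.span_le (p := LinearMap.ker f)).mpr ?_ ht
  rintro _ ⟨⟨x, -⟩, ⟨y, -⟩, rfl⟩
  exact hf x y

section

variable {R 𝔤 V : Type*} [CommRing R] [LieRing 𝔤] [LieAlgebra R 𝔤] [AddCommGroup V] [Module R V]

def IsLinearKernelVector (ρ : 𝔤 →ₗ⁅R⁆ Module.End R V) (ψ : 𝔤 →ₗ[R] V) : Prop :=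
  ∀ x, ρ x (ψ x) = 0

def equivarianceDefect (ρ : 𝔤 →ₗ⁅R⁆ Module.End R V) (ψ : 𝔤 →ₗ[R] V) (x y : 𝔤) : V :=
  ψ ⁅x, y⁆ - ρ x (ψ y)

theorem LieHom.map_lie_apply (ρ : 𝔤 →ₗ⁅R⁆ Module.End R V) (x y : 𝔤) (v : V) :
    ρ ⁅x, y⁆ v = ρ x (ρ y v) - ρ y (ρ x v) := by
  rw [LieHom.map_lie, Ring.lie_def, LinearMap.sub_apply, Module.End.mul_apply,
    Module.End.mul_apply]

namespace IsLinearKernelVector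

variable {ρ : 𝔤 →ₗ⁅R⁆ Module.End R V} {ψ : 𝔤 →ₗ[R] V} (hψ : IsLinearKernelVector ρ ψ)
include hψ

local notation "F" => equivarianceDefect ρ ψ

theorem apply_comm (u v : 𝔤) : ρ u (ψ v) = -ρ v (ψ u) := by
  have h := hψ (u + v)
  simp only [map_add, LinearMap.add_apply, hψ u, hψ v] at h
  linear_combination (norm := module) h

theorem defect_antisymm (y z : 𝔤) : F y z = -F z y := by
  rw [equivarianceDefect, equivarianceDefect, ← lie_skew, map_neg, hψ.apply_comm z y]
  module

theorem apply_apply_comm (p u v : 𝔤) : ρ p (ρ u (ψ v)) = -ρ p (ρ v (ψ u)) := by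
  rw [hψ.apply_comm u v, map_neg]

theorem apply_apply_apply_comm (p q u v : 𝔤) :
    ρ p (ρ q (ρ u (ψ v))) = -ρ p (ρ q (ρ v (ψ u))) := by
  rw [hψ.apply_comm u v, map_neg, map_neg]

theorem apply_defect_comm (u v w : 𝔤) : ρ u (F v w) = -ρ v (F u w) := by
  have h₁ := hψ.apply_comm u ⁅v, w⁆
  have h₂ := hψ.apply_comm v ⁅u, w⁆
  rw [LieHom.map_lie_apply] at h₁ h₂
  rw [equivarianceDefect, equivarianceDefect, map_sub, map_sub]
  linear_combination (norm := module) h₁ + h₂ - hψ.apply_apply_comm v w u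
    - hψ.apply_apply_comm u w v + hψ.apply_apply_comm w u v

theorem map_lie_apply_defect (h2 : IsSMulRegular V (2 : R)) (a b c d : 𝔤) :
    ρ ⁅a, b⁆ (F c d) = ρ d (ρ a (F b c)) - ρ c (ρ a (F b d)) := by
  -- twice the difference of the two sides is a signed sum of instances of `apply_comm` under at
  -- most two applications of `ρ`
  refine h2 ?_
  beta_reduce
  linear_combination (norm := skip)
    hψ.apply_comm ⁅a, b⁆ ⁅c, d⁆ - hψ.apply_comm ⁅a, c⁆ ⁅b, d⁆ + hψ.apply_comm ⁅a, d⁆ ⁅b, c⁆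
    + hψ.apply_apply_comm a b ⁅c, d⁆ + hψ.apply_apply_comm a c ⁅b, d⁆
    - hψ.apply_apply_comm a d ⁅b, c⁆ - hψ.apply_apply_comm b a ⁅c, d⁆
    - hψ.apply_apply_comm b c ⁅a, d⁆ + hψ.apply_apply_comm b d ⁅a, c⁆
    + hψ.apply_apply_comm c a ⁅b, d⁆ + hψ.apply_apply_comm c b ⁅a, d⁆
    - hψ.apply_apply_comm c d ⁅a, b⁆ - hψ.apply_apply_comm d a ⁅b, c⁆
    - hψ.apply_apply_comm d b ⁅a, c⁆ + hψ.apply_apply_comm d c ⁅a, b⁆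
    - hψ.apply_apply_apply_comm a b c d - hψ.apply_apply_apply_comm a c b d
    + hψ.apply_apply_apply_comm a d b c + hψ.apply_apply_apply_comm b a c d
    + hψ.apply_apply_apply_comm b c a d - hψ.apply_apply_apply_comm b d a c
    - hψ.apply_apply_apply_comm c a b d - hψ.apply_apply_apply_comm c b a d
    + hψ.apply_apply_apply_comm c d a b + hψ.apply_apply_apply_comm d a b c
    + hψ.apply_apply_apply_comm d b a c - hψ.apply_apply_apply_comm d c a b
  simp only [equivarianceDefect, map_sub, LieHom.map_lie_apply]
  module

theorem map_lie_apply_apply_defect (h2 : IsSMulRegular V (2 : R)) (u v x y z : 𝔤) :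
    ρ ⁅u, v⁆ (ρ x (F y z)) =
      ρ ⁅x, z⁆ (ρ u (F v y)) - ρ ⁅x, y⁆ (ρ u (F v z)) + ρ ⁅z, y⁆ (ρ u (F v x)) := by
  have hA := congrArg (ρ x) (hψ.map_lie_apply_defect h2 u v y z)
  have hB := hψ.map_lie_apply_defect h2 ⁅u, v⁆ x y z
  have hC := congrArg (ρ z) (hψ.map_lie_apply_defect h2 u v x y)
  have hD := congrArg (ρ y) (hψ.map_lie_apply_defect h2 u v x z)
  simp only [map_sub, LieHom.map_lie_apply] at hA hB hC hD ⊢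
  linear_combination (norm := module) hA + hB + hC - hD

theorem map_lie_apply_apply_defect_eq_zero (h2 : IsSMulRegular V (2 : R)) (u v x y z : 𝔤) :
    ρ ⁅u, v⁆ (ρ x (F y z)) = 0 :=
  eq_zero_of_petersen_exchange (fun a b c d e => ρ ⁅a, b⁆ (ρ c (F d e)))
    (fun a b c d e => by rw [← lie_skew, map_neg, LinearMap.neg_apply])
    (fun a b c d e => by rw [hψ.apply_defect_comm, map_neg])
    (fun a b c d e => by rw [hψ.defect_antisymm, map_neg, map_neg])
    (hψ.map_lie_apply_apply_defect h2) h2 u v x y z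

end IsLinearKernelVector

end

theorem linearKernelVector_equivariant_of_semisimple_general {𝔽 : Type*} [Field 𝔽]
    (h2 : ringChar 𝔽 ≠ 2)
    {𝔤 V : Type*} [LieRing 𝔤] [LieAlgebra 𝔽 𝔤]
    [LieAlgebra.IsSemisimple 𝔽 𝔤] [AddCommGroup V] [Module 𝔽 V]
    (ρ : 𝔤 →ₗ⁅𝔽⁆ Module.End 𝔽 V)
    (htriv : ∀ v : V, (∀ x : 𝔤, ρ x v = 0) → v = 0)
    (ψ : 𝔤 →ₗ[𝔽] V) (hψ : ∀ x : 𝔤, ρ x (ψ x) = 0) :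
    ∀ x y : 𝔤, ψ ⁅x, y⁆ - ρ x (ψ y) = 0 := by
  have h2' : IsSMulRegular V (2 : 𝔽) := .of_ne_zero (Ring.two_ne_zero h2)
  have apply_eq_zero_of_lie : ∀ w : V, (∀ a b : 𝔤, ρ ⁅a, b⁆ w = 0) → ∀ t : 𝔤, ρ t w = 0 :=
    fun w hw => LinearMap.congr_fun (LieAlgebra.IsSemisimple.linearMap_eq_zero_of_map_lie
      ((LinearMap.applyₗ w).comp ρ.toLinearMap) hw)
  intro x y
  refine htriv _ fun u => htriv _ fun t => apply_eq_zero_of_lie _ (fun a b => ?_) t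
  exact IsLinearKernelVector.map_lie_apply_apply_defect_eq_zero hψ h2' a b u x y

/-- For a finite-dimensional semisimple Lie algebra over an algebraically closed field of
characteristic not 2 or 3, and a representation with no trivial subrepresentation, every
linear kernel vector is a homomorphism from the adjoint representation:
`ψ([x,y]) − ρ(x)ψ(y) = 0`. -/
theorem linearKernelVector_equivariant_of_semisimple {𝔽 : Type*} [Field 𝔽] [IsAlgClosed 𝔽]
    (h2 : ringChar 𝔽 ≠ 2) (h3 : ringChar 𝔽 ≠ 3)
    {𝔤 V : Type*} [LieRing 𝔤] [LieAlgebra 𝔽 𝔤] [Module.Finite 𝔽 𝔤]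
    [LieAlgebra.IsSemisimple 𝔽 𝔤] [AddCommGroup V] [Module 𝔽 V]
    (ρ : 𝔤 →ₗ⁅𝔽⁆ Module.End 𝔽 V)
    (htriv : ∀ v : V, (∀ x : 𝔤, ρ x v = 0) → v = 0)
    (ψ : 𝔤 →ₗ[𝔽] V) (hψ : ∀ x : 𝔤, ρ x (ψ x) = 0) :
    ∀ x y : 𝔤, ψ ⁅x, y⁆ - ρ x (ψ y) = 0 :=
  linearKernelVector_equivariant_of_semisimple_general h2 ρ htriv ψ hψ
end
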